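/- Suppose that for each n ∈ {1,…,N} and given j ∈ ℕ₊ there exist controls u*ₙ ∈ U (U convex) and a scalar ε* ∈ [0,λ] such that for the scaled vertices v_{ℓ,n} = ρ_ℓ·vₙ of the polytope ρ_ℓ S: (i) A^{j'} v_{ℓ,n} + Σ_{i=1}^{j'} A^{i-1} B u*ₙ ∈ X for all j' ∈ {1,…,j}, and (ii) A^j v_{ℓ,n} + Σ_{i=1}^{j} A^{i-1} B u*ₙ ∈ ε*·ρ_ℓ·S. Then for every x with Ψ_S(x) ≤ ρ_ℓ there exists u ∈ U such that A^{j'} x + Σ_{i=1}^{j'} A^{i-1} B u ∈ X for all j' ∈ {1,…,j} and A^j x + Σ_{i=1}^{j} A^{i-1} B u ∈ ε*·Ψ_S(x)·S. -/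
import Mathlib


open scoped Pointwise

/-- Gauge (Minkowski) function Ψ_S(x) = inf {μ ≥ 0 : x ∈ μS}. -/
noncomputable def psi {E : Type*} [AddCommGroup E] [Module ℝ E] (S : Set E) (x : E) : ℝ :=
  sInf {μ : ℝ | 0 ≤ μ ∧ x ∈ μ • S}

/-- State reached by applying input u constantly for j steps: A^j x + Σ_{i=1}^{j} A^{i-1} B u. -/
noncomputable def reach {n m : ℕ} (A : Matrix (Fin n) (Fin n) ℝ) (B : Matrix (Fin n) (Fin m) ℝ)
    (j : ℕ) (x : Fin n → ℝ) (u : Fin m → ℝ) : Fin n → ℝ :=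
  (A ^ j).mulVec x + (∑ i ∈ Finset.range j, A ^ i).mulVec (B.mulVec u)

/-- psi agrees with mathlib's gauge when `S` is nonempty. -/
lemma psi_eq_gauge {E : Type*} [AddCommGroup E] [Module ℝ E] (S : Set E)
    (hne : S.Nonempty) (x : E) : psi S x = gauge S x := by
  rcases eq_or_ne x 0 with rfl | hx
  · rw [gauge_zero]
    have h0mem : (0 : ℝ) ∈ {μ : ℝ | 0 ≤ μ ∧ (0 : E) ∈ μ • S} := by
      refine ⟨le_refl 0, ?_⟩
      rw [Set.zero_smul_set hne]
      exact Set.mem_zero.mpr rfl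
    have hbdd : BddBelow {μ : ℝ | 0 ≤ μ ∧ (0 : E) ∈ μ • S} :=
      ⟨0, fun μ hμ => hμ.1⟩
    exact le_antisymm (csInf_le hbdd h0mem) (le_csInf ⟨0, h0mem⟩ fun μ hμ => hμ.1)
  · unfold psi gauge
    congr 1
    ext μ
    simp only [Set.mem_setOf_eq]
    constructor
    · rintro ⟨hμ0, hμ⟩
      refine ⟨lt_of_le_of_ne hμ0 ?_, hμ⟩
      rintro rfl
      rw [Set.zero_smul_set hne] at hμ
      exact hx (Set.mem_zero.mp hμ)
    · rintro ⟨hμ0, hμ⟩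
      exact ⟨hμ0.le, hμ⟩

/-- Linearity of `reach` in the pair (x, u). -/
lemma reach_smul {n m : ℕ} (A : Matrix (Fin n) (Fin n) ℝ) (B : Matrix (Fin n) (Fin m) ℝ)
    (j : ℕ) (c : ℝ) (x : Fin n → ℝ) (u : Fin m → ℝ) :
    reach A B j (c • x) (c • u) = c • reach A B j x u := by
  unfold reach
  rw [Matrix.mulVec_smul, Matrix.mulVec_smul, Matrix.mulVec_smul, smul_add]

lemma reach_sum {n m : ℕ} (A : Matrix (Fin n) (Fin n) ℝ) (B : Matrix (Fin n) (Fin m) ℝ)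
    (j : ℕ) {ι : Type*} [Fintype ι] (x : ι → (Fin n → ℝ)) (u : ι → (Fin m → ℝ)) :
    reach A B j (∑ i, x i) (∑ i, u i) = ∑ i, reach A B j (x i) (u i) := by
  have h1 : (A ^ j).mulVec (∑ i, x i) = ∑ i, (A ^ j).mulVec (x i) :=
    map_sum (A ^ j).mulVecLin x Finset.univ
  have h2 : B.mulVec (∑ i, u i) = ∑ i, B.mulVec (u i) :=
    map_sum B.mulVecLin u Finset.univ
  have h3 : (∑ i ∈ Finset.range j, A ^ i).mulVec (∑ i, B.mulVec (u i))
      = ∑ i, (∑ i' ∈ Finset.range j, A ^ i').mulVec (B.mulVec (u i)) :=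
    map_sum (∑ i ∈ Finset.range j, A ^ i).mulVecLin _ Finset.univ
  unfold reach
  rw [h1, h2, h3, ← Finset.sum_add_distrib]

theorem stmt6 {n m N : ℕ} (A : Matrix (Fin n) (Fin n) ℝ) (B : Matrix (Fin n) (Fin m) ℝ)
    (X : Set (Fin n → ℝ)) (U : Set (Fin m → ℝ))
    (hXconv : Convex ℝ X) (hXcomp : IsCompact X) (hX0 : (0 : Fin n → ℝ) ∈ interior X)
    (hUconv : Convex ℝ U) (hUcomp : IsCompact U) (hU0 : (0 : Fin m → ℝ) ∈ interior U)
    (v : Fin N → (Fin n → ℝ)) (S : Set (Fin n → ℝ))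
    (hS : S = convexHull ℝ (Set.range v)) (hSX : S ⊆ X)
    (hcomp : IsCompact S) (hconv : Convex ℝ S) (h0 : (0 : Fin n → ℝ) ∈ interior S)
    (ρ : ℝ) (hρ0 : 0 < ρ) (hρ1 : ρ ≤ 1)
    (lam : ℝ) (hlam0 : 0 ≤ lam) (hlam1 : lam < 1)
    (j : ℕ) (hj : 1 ≤ j)
    (ustar : Fin N → (Fin m → ℝ)) (hustar : ∀ i : Fin N, ustar i ∈ U)
    (eps : ℝ) (heps0 : 0 ≤ eps) (heps1 : eps ≤ lam)
    (hstate : ∀ i : Fin N, ∀ j', 1 ≤ j' → j' ≤ j → reach A B j' (ρ • v i) (ustar i) ∈ X)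
    (hcontr : ∀ i : Fin N, reach A B j (ρ • v i) (ustar i) ∈ (eps * ρ) • S) :
    ∀ x : Fin n → ℝ, psi S x ≤ ρ → ∃ u ∈ U,
      (∀ j', 1 ≤ j' → j' ≤ j → reach A B j' x u ∈ X) ∧
      reach A B j x u ∈ (eps * psi S x) • S := by
  intro x hxρ
  have hS0 : (0 : Fin n → ℝ) ∈ S := interior_subset h0
  have hSne : S.Nonempty := ⟨0, hS0⟩
  have hX0' : (0 : Fin n → ℝ) ∈ X := interior_subset hX0
  have hU0' : (0 : Fin m → ℝ) ∈ U := interior_subset hU0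
  have habs : Absorbent ℝ S := absorbent_nhds_zero (mem_interior_iff_mem_nhds.mp h0)
  have hbdd : Bornology.IsVonNBounded ℝ S := hcomp.totallyBounded.isVonNBounded ℝ
  have hpsig : psi S x = gauge S x := psi_eq_gauge S hSne x
  set ψ := psi S x with hψ
  have hψ0 : 0 ≤ ψ := hpsig ▸ gauge_nonneg x
  rcases eq_or_lt_of_le hψ0 with hψz | hψpos
  · -- psi S x = 0, hence x = 0
    have hx0 : x = 0 := by
      rw [← (gauge_eq_zero habs hbdd (x := x)), ← hpsig, ← hψz]
    refine ⟨0, hU0', ?_, ?_⟩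
    · intro j' _ _
      simp only [hx0, reach, Matrix.mulVec_zero, add_zero, hX0']
    · rw [hx0, ← hψz]
      have : reach A B j (0 : Fin n → ℝ) (0 : Fin m → ℝ) = 0 := by
        simp [reach, Matrix.mulVec_zero]
      rw [this, mul_zero, Set.zero_smul_set hSne]
      exact Set.mem_zero.mpr rfl
  · -- psi S x > 0
    have hψpos' : (0 : ℝ) < ψ := hψpos
    -- x / ψ ∈ S
    have hmem : ψ⁻¹ • x ∈ S := by
      have hg1 : gauge S (ψ⁻¹ • x) ≤ 1 := by
        rw [gauge_smul_of_nonneg (inv_nonneg.mpr hψ0), ← hpsig]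
        simp [smul_eq_mul, inv_mul_cancel₀ hψpos'.ne']
      have := (gauge_le_one_iff_mem_closure hconv
        (mem_interior_iff_mem_nhds.mp h0)).mp hg1
      rwa [hcomp.isClosed.closure_eq] at this
    rw [hS, mem_convexHull_iff_exists_fintype] at hmem
    obtain ⟨ι, hι, w, z, hw0, hw1, hz, hzx⟩ := hmem
    choose k hk using fun i => Set.mem_range.mp (hz i)
    set c : ℝ := ψ / ρ with hc
    have hc0 : 0 ≤ c := div_nonneg hψ0 hρ0.le
    have hc1 : c ≤ 1 := (div_le_one hρ0).mpr hxρ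
    have hcρ : c * ρ = ψ := div_mul_cancel₀ ψ hρ0.ne'
    -- key decomposition
    have hxdec : x = c • ∑ i, w i • (ρ • v (k i)) := by
      have : ∑ i, w i • (ρ • v (k i)) = ρ • ∑ i, w i • z i := by
        rw [Finset.smul_sum]
        refine Finset.sum_congr rfl fun i _ => ?_
        rw [hk i, smul_comm]
      rw [this, hzx, smul_smul, hcρ]
      rw [smul_smul, mul_inv_cancel₀ hψpos'.ne', one_smul]
    refine ⟨c • ∑ i, w i • ustar (k i), ?_, ?_, ?_⟩
    · -- membership in U
      have hz : ∑ i, w i • ustar (k i) ∈ U :=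
        hUconv.sum_mem (fun i _ => hw0 i) hw1 (fun i _ => hustar (k i))
      have := hUconv hz hU0' hc0 (sub_nonneg.mpr hc1) (by ring)
      simpa [smul_zero] using this
    · -- state constraints
      intro j' hj'1 hj'2
      have hr : reach A B j' x (c • ∑ i, w i • ustar (k i))
          = c • ∑ i, w i • reach A B j' (ρ • v (k i)) (ustar (k i)) := by
        rw [hxdec, reach_smul, reach_sum]
        congr 1
        refine Finset.sum_congr rfl fun i _ => ?_
        rw [reach_smul]
      rw [hr]
      have hmemX : ∑ i, w i • reach A B j' (ρ • v (k i)) (ustar (k i)) ∈ X :=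
        hXconv.sum_mem (fun i _ => hw0 i) hw1 (fun i _ => hstate (k i) j' hj'1 hj'2)
      have := hXconv hmemX hX0' hc0 (sub_nonneg.mpr hc1) (by ring)
      simpa [smul_zero] using this
    · -- contraction
      have hr : reach A B j x (c • ∑ i, w i • ustar (k i))
          = c • ∑ i, w i • reach A B j (ρ • v (k i)) (ustar (k i)) := by
        rw [hxdec, reach_smul, reach_sum]
        congr 1
        refine Finset.sum_congr rfl fun i _ => ?_
        rw [reach_smul]
      rw [hr]
      have hsconv : Convex ℝ ((eps * ρ) • S) := hconv.smul _
      have hmemS : ∑ i, w i • reach A B j (ρ • v (k i)) (ustar (k i)) ∈ (eps * ρ) • S :=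
        hsconv.sum_mem (fun i _ => hw0 i) hw1 (fun i _ => hcontr (k i))
      obtain ⟨s', hs', hes⟩ := hmemS
      refine ⟨s', hs', ?_⟩
      rw [← hes, smul_smul]
      congr 1
      rw [← hcρ]; ring
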